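/- (Lemma: quadratic bound) Let uᵏ ∈ ℝⁿ × ℝᵐ, let ũᵏ be a prediction from uᵏ, and let u^{k+1} = uᵏ − M(uᵏ − ũᵏ). Then for every u ∈ Ω, θ(u) − θ(ũᵏ) + (u − ũᵏ)ᵀF(u) ≥ (1/2)(‖u − u^{k+1}‖²_H − ‖u − uᵏ‖²_H) + (1/2)‖uᵏ − ũᵏ‖²_G. -/

import Mathlib

open Matrix

noncomputable section

/-- A primal-dual pair `(x, y) ∈ ℝⁿ × ℝᵐ`. -/
abbrev PDVec (n m : ℕ) := (Fin n → ℝ) × (Fin m → ℝ)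

/-- View a primal-dual pair as a single vector indexed by `Fin n ⊕ Fin m`. -/
def pdToVec {n m : ℕ} (u : PDVec n m) : Fin n ⊕ Fin m → ℝ := Sum.elim u.1 u.2

/-- `θ(u) = f(x) + g(y)`. -/
def pdTheta {n m : ℕ} (f : (Fin n → ℝ) → ℝ) (g : (Fin m → ℝ) → ℝ) (u : PDVec n m) : ℝ :=
  f u.1 + g u.2

/-- `F(u) = (−Aᵀy, Ax)`. -/
def pdF {n m : ℕ} (A : Matrix (Fin m) (Fin n) ℝ) (u : PDVec n m) : PDVec n m :=
  (-(Aᵀ.mulVec u.2), A.mulVec u.1)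

/-- `Q = [[r·Iₙ, Aᵀ], [α·A, s·Iₘ]]`. -/
def pdQ {n m : ℕ} (A : Matrix (Fin m) (Fin n) ℝ) (r s α : ℝ) :
    Matrix (Fin n ⊕ Fin m) (Fin n ⊕ Fin m) ℝ :=
  Matrix.fromBlocks (r • 1) Aᵀ (α • A) (s • 1)

/-- `M = [[Iₙ, 0], [−((1−α)/s)·A, Iₘ]]`. -/
def pdM {n m : ℕ} (A : Matrix (Fin m) (Fin n) ℝ) (s α : ℝ) :
    Matrix (Fin n ⊕ Fin m) (Fin n ⊕ Fin m) ℝ :=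
  Matrix.fromBlocks 1 0 (-(((1 - α) / s) • A)) 1

/-- `H = [[r·Iₙ + ((1−α)/s)·AᵀA, Aᵀ], [A, s·Iₘ]]`. -/
def pdH {n m : ℕ} (A : Matrix (Fin m) (Fin n) ℝ) (r s α : ℝ) :
    Matrix (Fin n ⊕ Fin m) (Fin n ⊕ Fin m) ℝ :=
  Matrix.fromBlocks (r • 1 + ((1 - α) / s) • (Aᵀ * A)) Aᵀ A (s • 1)

/-- `G = [[r·Iₙ + (α(1−α)/s)·AᵀA, Aᵀ], [A, s·Iₘ]]`. -/
def pdG {n m : ℕ} (A : Matrix (Fin m) (Fin n) ℝ) (r s α : ℝ) :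
    Matrix (Fin n ⊕ Fin m) (Fin n ⊕ Fin m) ℝ :=
  Matrix.fromBlocks (r • 1 + ((α * (1 - α)) / s) • (Aᵀ * A)) Aᵀ A (s • 1)

/-- `‖v‖²_S = vᵀ S v`. -/
def pdNormSq {k : Type*} [Fintype k] (S : Matrix k k ℝ) (v : k → ℝ) : ℝ :=
  v ⬝ᵥ S.mulVec v

/-- `ut` is a prediction from `uk`: its first component minimizes
`x ↦ f(x) − (yᵏ)ᵀAx + (r/2)‖x − xᵏ‖²` over `X`, and its second component minimizes
`y ↦ g(y) + yᵀA(x̃ᵏ + α(x̃ᵏ − xᵏ)) + (s/2)‖y − yᵏ‖²` over `Y`. -/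
def IsPrediction {n m : ℕ} (X : Set (Fin n → ℝ)) (Y : Set (Fin m → ℝ))
    (f : (Fin n → ℝ) → ℝ) (g : (Fin m → ℝ) → ℝ)
    (A : Matrix (Fin m) (Fin n) ℝ) (r s α : ℝ) (uk ut : PDVec n m) : Prop :=
  ut.1 ∈ X ∧
  (∀ x ∈ X,
      f ut.1 - uk.2 ⬝ᵥ A.mulVec ut.1 + r / 2 * ((ut.1 - uk.1) ⬝ᵥ (ut.1 - uk.1)) ≤
        f x - uk.2 ⬝ᵥ A.mulVec x + r / 2 * ((x - uk.1) ⬝ᵥ (x - uk.1))) ∧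
  ut.2 ∈ Y ∧
  (∀ y ∈ Y,
      g ut.2 + ut.2 ⬝ᵥ A.mulVec (ut.1 + α • (ut.1 - uk.1)) +
          s / 2 * ((ut.2 - uk.2) ⬝ᵥ (ut.2 - uk.2)) ≤
        g y + y ⬝ᵥ A.mulVec (ut.1 + α • (ut.1 - uk.1)) +
          s / 2 * ((y - uk.2) ⬝ᵥ (y - uk.2)))

/-- The solution set `Ω*` of the variational inequality `VI(Ω, F, θ)`. -/
def VISol {n m : ℕ} (X : Set (Fin n → ℝ)) (Y : Set (Fin m → ℝ))
    (f : (Fin n → ℝ) → ℝ) (g : (Fin m → ℝ) → ℝ)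
    (A : Matrix (Fin m) (Fin n) ℝ) : Set (PDVec n m) :=
  {u | u.1 ∈ X ∧ u.2 ∈ Y ∧
    ∀ v : PDVec n m, v.1 ∈ X → v.2 ∈ Y →
      pdTheta f g v - pdTheta f g u + (pdToVec v - pdToVec u) ⬝ᵥ pdToVec (pdF A u) ≥ 0}

/-
Both prediction subproblems are proximal steps, so their first-order optimality conditions
combine into the variational inequality `θ(u) - θ(ũ) + (u - ũ)ᵀF(ũ) ≥ (u - ũ)ᵀQ(uᵏ - ũ)` on `Ω`.
Since `F` is affine with a skew-symmetric linear part, `F(ũ)` may be replaced by `F(u)`.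
The right-hand side is then rewritten with `Q = HM`, `H` symmetric and `MᵀQ + G = Q + Qᵀ`:
for `uᵏ⁺¹ = uᵏ - M(uᵏ - ũ)` the cross term `(u - ũ)ᵀQ(uᵏ - ũ)` is exactly
`½(‖u - uᵏ⁺¹‖²_H - ‖u - uᵏ‖²_H) + ½‖uᵏ - ũ‖²_G`.
-/

open Filter Topology

theorem nonneg_of_forall_nonneg_mul_add_sq_mul {h K : ℝ}
    (H : ∀ t : ℝ, 0 < t → t ≤ 1 → 0 ≤ t * h + t ^ 2 * K) : 0 ≤ h := by
  have hlim : Tendsto (fun t : ℝ => h + t * K) (𝓝[>] 0) (𝓝 h) := by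
    have : Tendsto (fun t : ℝ => h + t * K) (𝓝 0) (𝓝 (h + 0 * K)) :=
      (continuous_const.add (continuous_id.mul continuous_const)).tendsto 0
    simpa using this.mono_left nhdsWithin_le_nhds
  refine ge_of_tendsto hlim ?_
  filter_upwards [Ioc_mem_nhdsGT one_pos] with t ⟨ht0, ht1⟩
  have hfac : t * h + t ^ 2 * K = t * (h + t * K) := by ring
  exact (mul_nonneg_iff_of_pos_left ht0).mp (hfac ▸ H t ht0 ht1)

theorem ConvexOn.prox_optimality {ι : Type*} [Fintype ι] {X : Set (ι → ℝ)} {φ : (ι → ℝ) → ℝ}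
    (hφ : ConvexOn ℝ X φ) {ρ : ℝ} {x₀ xt : ι → ℝ} (hxt : xt ∈ X)
    (hmin : IsMinOn (fun x => φ x + ρ / 2 * ((x - x₀) ⬝ᵥ (x - x₀))) X xt) {x : ι → ℝ}
    (hx : x ∈ X) : 0 ≤ φ x - φ xt + ρ * ((x - xt) ⬝ᵥ (xt - x₀)) := by
  refine nonneg_of_forall_nonneg_mul_add_sq_mul (K := ρ / 2 * ((x - xt) ⬝ᵥ (x - xt))) ?_
  intro t ht0 ht1
  have hseg : xt + t • (x - xt) = (1 - t) • xt + t • x := by module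
  have hmem : xt + t • (x - xt) ∈ X := hseg ▸ hφ.1 hxt hx (by linarith) ht0.le (by ring)
  have hconv : φ (xt + t • (x - xt)) ≤ (1 - t) * φ xt + t * φ x :=
    hseg ▸ hφ.2 hxt hx (by linarith) ht0.le (by ring)
  have hle := isMinOn_iff.mp hmin _ hmem
  have hsq : (xt + t • (x - xt) - x₀) ⬝ᵥ (xt + t • (x - xt) - x₀) =
      (xt - x₀) ⬝ᵥ (xt - x₀) + 2 * t * ((x - xt) ⬝ᵥ (xt - x₀)) +
        t ^ 2 * ((x - xt) ⬝ᵥ (x - xt)) := by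
    rw [show xt + t • (x - xt) - x₀ = (xt - x₀) + t • (x - xt) by module]
    simp only [add_dotProduct, dotProduct_add, smul_dotProduct, dotProduct_smul, smul_eq_mul,
      dotProduct_comm (xt - x₀) (x - xt)]
    ring
  simp only [hsq] at hle
  nlinarith

theorem dotProduct_mulVec_eq_half_normSq_sub {k : Type*} [Fintype k] {H M Q G : Matrix k k ℝ}
    (hH : H.IsSymm) (hQ : H * M = Q) (hG : Mᵀ * Q + G = Q + Qᵀ) (a v v' w : k → ℝ)
    (hw : w = v - M *ᵥ (v - v')) :
    (a - v') ⬝ᵥ Q *ᵥ (v - v') =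
      1 / 2 * (pdNormSq H (a - w) - pdNormSq H (a - v)) + 1 / 2 * pdNormSq G (v - v') := by
  subst hw hQ
  rw [show a - (v - M *ᵥ (v - v')) = (a - v) + M *ᵥ (v - v') by abel,
    show a - v' = (a - v) + (v - v') by abel]
  generalize v - v' = d
  generalize a - v = e
  have hsymm : e ⬝ᵥ H *ᵥ (M *ᵥ d) = (M *ᵥ d) ⬝ᵥ H *ᵥ e := by
    rw [← dotProduct_transpose_mulVec, hH.eq]
  have hnorm : pdNormSq H (e + M *ᵥ d) =
      pdNormSq H e + 2 * (e ⬝ᵥ H *ᵥ (M *ᵥ d)) + (M *ᵥ d) ⬝ᵥ H *ᵥ (M *ᵥ d) := by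
    rw [pdNormSq, pdNormSq, mulVec_add, dotProduct_add, add_dotProduct, add_dotProduct, ← hsymm]
    ring
  have hGd : pdNormSq G d = 2 * (d ⬝ᵥ H *ᵥ (M *ᵥ d)) - (M *ᵥ d) ⬝ᵥ H *ᵥ (M *ᵥ d) := by
    have h := congrArg (fun B => d ⬝ᵥ B *ᵥ d) hG
    simp only [add_mulVec, dotProduct_add, dotProduct_transpose_mulVec, ← mulVec_mulVec] at h
    rw [pdNormSq]
    linarith [dotProduct_comm (H *ᵥ M *ᵥ d) (M *ᵥ d)]
  rw [add_dotProduct, ← mulVec_mulVec, hnorm, hGd]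
  ring

section PrimalDual

variable {n m : ℕ}

lemma pdH_isSymm (A : Matrix (Fin m) (Fin n) ℝ) (r s α : ℝ) :
    (pdH A r s α).IsSymm := by
  simp [pdH, Matrix.IsSymm, fromBlocks_transpose, transpose_add, transpose_smul, transpose_mul]

lemma pdH_mul_pdM (A : Matrix (Fin m) (Fin n) ℝ) (r : ℝ) {s : ℝ} (hs : s ≠ 0)
    (α : ℝ) : pdH A r s α * pdM A s α = pdQ A r s α := by
  rw [pdH, pdM, pdQ, fromBlocks_multiply]
  congr 1
  · rw [Matrix.mul_one, Matrix.mul_neg, Matrix.mul_smul]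
    abel
  · simp
  · rw [Matrix.mul_one, Matrix.mul_neg, Matrix.smul_mul, Matrix.one_mul, smul_smul,
      mul_div_cancel₀ _ hs]
    module
  · simp

lemma pdM_transpose_mul_pdQ_add_pdG (A : Matrix (Fin m) (Fin n) ℝ) (r : ℝ) {s : ℝ}
    (hs : s ≠ 0) (α : ℝ) :
    (pdM A s α)ᵀ * pdQ A r s α + pdG A r s α = pdQ A r s α + (pdQ A r s α)ᵀ := by
  rw [pdM, pdQ, pdG, fromBlocks_transpose, fromBlocks_transpose, fromBlocks_multiply,
    fromBlocks_add, fromBlocks_add]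
  simp only [transpose_one, transpose_zero, transpose_neg, transpose_smul, transpose_transpose,
    Matrix.one_mul, Matrix.zero_mul, Matrix.mul_one, zero_add, Matrix.neg_mul, Matrix.smul_mul,
    Matrix.mul_smul]
  congr 1
  · rw [smul_neg, smul_smul, mul_div_assoc']
    module
  · rw [smul_neg, smul_smul, mul_div_cancel₀ _ hs]
    module
  · simp

lemma pdToVec_sub (u v : PDVec n m) : pdToVec (u - v) = pdToVec u - pdToVec v := by
  funext i
  cases i <;> rfl

lemma pdToVec_dotProduct (u v : PDVec n m) : pdToVec u ⬝ᵥ pdToVec v = u.1 ⬝ᵥ v.1 + u.2 ⬝ᵥ v.2 :=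
  sumElim_dotProduct_sumElim _ _ _ _

lemma pdQ_mulVec (A : Matrix (Fin m) (Fin n) ℝ) (r s α : ℝ) (d : PDVec n m) :
    pdQ A r s α *ᵥ pdToVec d = pdToVec (r • d.1 + Aᵀ *ᵥ d.2, α • (A *ᵥ d.1) + s • d.2) := by
  rw [pdQ, fromBlocks_mulVec]
  simp [pdToVec, smul_mulVec]

lemma dotProduct_pdF_sub_pdF (A : Matrix (Fin m) (Fin n) ℝ) (u v : PDVec n m) :
    (pdToVec u - pdToVec v) ⬝ᵥ (pdToVec (pdF A u) - pdToVec (pdF A v)) = 0 := by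
  rw [← pdToVec_sub, ← pdToVec_sub, pdToVec_dotProduct]
  simp only [pdF, Prod.fst_sub, Prod.snd_sub, ← neg_add', ← sub_eq_add_neg, ← mulVec_sub,
    dotProduct_neg, dotProduct_transpose_mulVec]
  ring

variable {X : Set (Fin n → ℝ)} {Y : Set (Fin m → ℝ)} {f : (Fin n → ℝ) → ℝ}
  {g : (Fin m → ℝ) → ℝ} {A : Matrix (Fin m) (Fin n) ℝ} {r s α : ℝ} {uk ut : PDVec n m}

theorem IsPrediction.dotProduct_pdQ_le (hf : ConvexOn ℝ X f) (hg : ConvexOn ℝ Y g)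
    (hpred : IsPrediction X Y f g A r s α uk ut) {u : PDVec n m} (hx : u.1 ∈ X) (hy : u.2 ∈ Y) :
    (pdToVec u - pdToVec ut) ⬝ᵥ pdQ A r s α *ᵥ (pdToVec uk - pdToVec ut) ≤
      pdTheta f g u - pdTheta f g ut + (pdToVec u - pdToVec ut) ⬝ᵥ pdToVec (pdF A ut) := by
  obtain ⟨hxt, hxmin, hyt, hymin⟩ := hpred
  set w := ut.1 + α • (ut.1 - uk.1)
  have hφ : ConvexOn ℝ X (fun x => f x - uk.2 ⬝ᵥ A *ᵥ x) :=
    hf.sub ((dotProductBilin ℝ ℝ uk.2 ∘ₗ A.mulVecLin).concaveOn hf.1)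
  have hψ : ConvexOn ℝ Y (fun y => g y + y ⬝ᵥ A *ᵥ w) :=
    hg.add (((dotProductBilin ℝ ℝ).flip (A *ᵥ w)).convexOn hg.1)
  have hxopt := hφ.prox_optimality hxt (isMinOn_iff.mpr hxmin) hx
  have hyopt := hψ.prox_optimality hyt (isMinOn_iff.mpr hymin) hy
  rw [← pdToVec_sub, ← pdToVec_sub, pdQ_mulVec, pdToVec_dotProduct, pdToVec_dotProduct, pdTheta,
    pdTheta, pdF]
  simp only [w, Prod.fst_sub, Prod.snd_sub, dotProduct_sub, sub_dotProduct, dotProduct_add,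
    dotProduct_neg, dotProduct_smul, smul_eq_mul, mulVec_sub, mulVec_add,
    mulVec_smul, dotProduct_transpose_mulVec] at hxopt hyopt ⊢
  linarith

end PrimalDual

theorem stmt_7_general (n m : ℕ)
    (X : Set (Fin n → ℝ)) (Y : Set (Fin m → ℝ))
    (hXcv : Convex ℝ X)
    (hYcv : Convex ℝ Y)
    (f : (Fin n → ℝ) → ℝ) (g : (Fin m → ℝ) → ℝ)
    (hf : ConvexOn ℝ Set.univ f) (hg : ConvexOn ℝ Set.univ g)
    (A : Matrix (Fin m) (Fin n) ℝ) (r s α : ℝ) (hs : 0 < s)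
    (uk ut uk1 : PDVec n m)
    (hpred : IsPrediction X Y f g A r s α uk ut)
    (hcorr : pdToVec uk1 = pdToVec uk - (pdM A s α).mulVec (pdToVec uk - pdToVec ut)) :
    ∀ u : PDVec n m, u.1 ∈ X → u.2 ∈ Y →
      pdTheta f g u - pdTheta f g ut + (pdToVec u - pdToVec ut) ⬝ᵥ pdToVec (pdF A u) ≥
        1 / 2 * (pdNormSq (pdH A r s α) (pdToVec u - pdToVec uk1) -
            pdNormSq (pdH A r s α) (pdToVec u - pdToVec uk)) +
          1 / 2 * pdNormSq (pdG A r s α) (pdToVec uk - pdToVec ut) := by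
  intro u hx hy
  have hVI := hpred.dotProduct_pdQ_le (hf.subset (Set.subset_univ X) hXcv)
    (hg.subset (Set.subset_univ Y) hYcv) hx hy
  have hskew := dotProduct_pdF_sub_pdF A u ut
  rw [dotProduct_sub] at hskew
  rw [← dotProduct_mulVec_eq_half_normSq_sub (pdH_isSymm A r s α) (pdH_mul_pdM A r hs.ne' α)
    (pdM_transpose_mul_pdQ_add_pdG A r hs.ne' α) _ _ _ _ hcorr]
  linarith

/-- Quadratic bound lemma (3.13). -/
theorem stmt_7 (n m : ℕ) (hn : 0 < n) (hm : 0 < m)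
    (X : Set (Fin n → ℝ)) (Y : Set (Fin m → ℝ))
    (hXne : X.Nonempty) (hXcl : IsClosed X) (hXcv : Convex ℝ X)
    (hYne : Y.Nonempty) (hYcl : IsClosed Y) (hYcv : Convex ℝ Y)
    (f : (Fin n → ℝ) → ℝ) (g : (Fin m → ℝ) → ℝ)
    (hf : ConvexOn ℝ Set.univ f) (hg : ConvexOn ℝ Set.univ g)
    (A : Matrix (Fin m) (Fin n) ℝ) (r s α : ℝ) (hr : 0 < r) (hs : 0 < s)
    (uk ut uk1 : PDVec n m)
    (hpred : IsPrediction X Y f g A r s α uk ut)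
    (hcorr : pdToVec uk1 = pdToVec uk - (pdM A s α).mulVec (pdToVec uk - pdToVec ut)) :
    ∀ u : PDVec n m, u.1 ∈ X → u.2 ∈ Y →
      pdTheta f g u - pdTheta f g ut + (pdToVec u - pdToVec ut) ⬝ᵥ pdToVec (pdF A u) ≥
        1 / 2 * (pdNormSq (pdH A r s α) (pdToVec u - pdToVec uk1) -
            pdNormSq (pdH A r s α) (pdToVec u - pdToVec uk)) +
          1 / 2 * pdNormSq (pdG A r s α) (pdToVec uk - pdToVec ut) :=
  stmt_7_general n m X Y hXcv hYcv f g hf hg A r s α hs uk ut uk1 hpred hcorr
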